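/- Let H be a Hopf algebra over a commutative ring k that is finitely generated projective as a k-module. Then the dual H* is a right Hopf module over H, with H*-comodule structure χ : H* → H* ⊗ H determined by gh = Σ h₍₀₎ g(h₍₁₎) for all g, h ∈ H*, and right H-module structure (h*·h)(x) = h*(x S(h)). -/

import Mathlib

open scoped TensorProduct

/-- The convolution product on the dual of a coalgebra: `(g * f)(a) = Σ g(a₍₁₎) f(a₍₂₎)`. -/
noncomputable def conv (k H : Type*) [CommRing k] [AddCommGroup H] [Module k H]
    [Coalgebra k H] (g f : Module.Dual k H) : Module.Dual k H :=
  LinearMap.mul' k k ∘ₗ TensorProduct.map g f ∘ₗ Coalgebra.comul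

/-- The right `H`-action on `H*` given by `(f·h)(x) = f(x S(h))`, bundled as a linear map
`H →ₗ (H* →ₗ H*)`. -/
noncomputable def dualAct (k H : Type*) [CommRing k] [Ring H] [HopfAlgebra k H] :
    H →ₗ[k] Module.Dual k H →ₗ[k] Module.Dual k H :=
  (LinearMap.llcomp k H H k).flip ∘ₗ (LinearMap.mul k H).flip ∘ₗ
    HopfAlgebra.antipode (R := k)

/-!
Since `H` is finitely generated projective, contracting the `H`-factor identifies `M ⊗ H` with
`Hom(H*, M)`. So `ρ f` can be taken to be the tensor whose contraction with `g` is `g * f`, and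
identities in `H* ⊗ H` and `H* ⊗ H ⊗ H` may be checked after contracting. Counitality and
coassociativity of `ρ` become unitality and associativity of convolution, while the Hopf module
condition reduces to `Σ Δ(S h₁) (h₂ ⊗ 1) = 1 ⊗ S h`. That identity holds in the convolution
algebra `Hom(H, H ⊗ H)`, where `Δ = ι_L * ι_R` and every algebra map `φ` out of `H` has convolution
inverse `φ ∘ S`: hence `ι_L = Δ * (ι_R ∘ S)` and `(Δ ∘ S) * ι_L = ι_R ∘ S`.
-/

open Module LinearMap TensorProduct WithConv Coalgebra HopfAlgebra

section TensorDual

variable {k M H : Type*} [CommSemiring k] [AddCommMonoid M] [Module k M] [AddCommMonoid H]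
  [Module k H]

variable (k M H) in
noncomputable def tensorEquivDualHom [Module.Finite k H] [Projective k H] :
    M ⊗[k] H ≃ₗ[k] (Dual k H →ₗ[k] M) :=
  TensorProduct.comm k M H ≪≫ₗ
    TensorProduct.congr (evalEquiv k H) (LinearEquiv.refl k M) ≪≫ₗ
    dualTensorHomEquiv k (Dual k H) M

lemma tensorEquivDualHom_apply [Module.Finite k H] [Projective k H] (t : M ⊗[k] H)
    (g : Dual k H) : tensorEquivDualHom k M H t g = TensorProduct.rid k M (lTensor M g t) := by
  induction t using TensorProduct.induction_on with
  | zero => simp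
  | tmul m h => simp [tensorEquivDualHom]
  | add t t' ht ht' => simp only [map_add, LinearMap.add_apply, ht, ht']

lemma ext_of_rid_lTensor [Module.Finite k H] [Projective k H] {t t' : M ⊗[k] H}
    (h : ∀ g : Dual k H,
      TensorProduct.rid k M (lTensor M g t) = TensorProduct.rid k M (lTensor M g t')) :
    t = t' :=
  (tensorEquivDualHom k M H).injective <| LinearMap.ext fun g => by
    simp only [tensorEquivDualHom_apply, h]

lemma rid_lTensor_map {N : Type*} [AddCommMonoid N] [Module k N] (φ : M →ₗ[k] N)
    (ψ : H →ₗ[k] H) (g : Dual k H) (t : M ⊗[k] H) :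
    TensorProduct.rid k N (lTensor N g (map φ ψ t)) =
      φ (TensorProduct.rid k M (lTensor M (g ∘ₗ ψ) t)) := by
  induction t using TensorProduct.induction_on with
  | zero => simp
  | tmul m h => simp
  | add t t' ht ht' => simp only [map_add, ht, ht']

end TensorDual

section Convolution

variable {k H : Type*} [CommRing k] [AddCommGroup H] [Module k H] [Coalgebra k H]

lemma conv_assoc (g g' f : Dual k H) :
    conv k H (conv k H g g') f = conv k H g (conv k H g' f) :=
  congrArg ofConv (mul_assoc (toConv g) (toConv g') (toConv f))

lemma counit_conv (f : Dual k H) : conv k H Coalgebra.counit f = f :=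
  congrArg ofConv (one_mul (toConv f))

variable (k H) in
noncomputable def convBilin : Dual k H →ₗ[k] Dual k H →ₗ[k] Dual k H :=
  ((LinearMap.mul k (WithConv (H →ₗ[k] k))).compl₁₂
    (WithConv.linearEquiv k _).symm.toLinearMap (WithConv.linearEquiv k _).symm.toLinearMap).compr₂
    (WithConv.linearEquiv k _).toLinearMap

@[simp] lemma convBilin_apply (g f : Dual k H) : convBilin k H g f = conv k H g f := rfl

lemma rid_lTensor_assoc_symm_lTensor_comul {M : Type*} [AddCommMonoid M] [Module k M]
    (g g' : Dual k H) (t : M ⊗[k] H) :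
    TensorProduct.rid k M (lTensor M g' (TensorProduct.rid k (M ⊗[k] H) (lTensor (M ⊗[k] H) g
      ((TensorProduct.assoc k M H H).symm (lTensor M comul t))))) =
    TensorProduct.rid k M (lTensor M (conv k H g' g) t) := by
  have hpair : (TensorProduct.rid k M).toLinearMap ∘ₗ lTensor M g' ∘ₗ
      (TensorProduct.rid k (M ⊗[k] H)).toLinearMap ∘ₗ lTensor (M ⊗[k] H) g ∘ₗ
      (TensorProduct.assoc k M H H).symm.toLinearMap =
      (TensorProduct.rid k M).toLinearMap ∘ₗ lTensor M (mul' k k ∘ₗ map g' g) := by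
    ext m h h'
    simp [mul_comm, mul_smul]
  simpa [conv, lTensor_comp] using congr($hpair (lTensor M comul t))

end Convolution

section HopfAlgebra

variable {k H : Type*} [CommSemiring k] [Semiring H] [HopfAlgebra k H]

lemma algHom_comp_antipode_convMul {B : Type*} [Semiring B] [Algebra k B] (φ : H →ₐ[k] B) :
    toConv (φ.toLinearMap ∘ₗ antipode k) * toConv φ.toLinearMap = 1 := by
  have h := (algHom_comp_convMul_distrib φ (toConv (antipode k)) (toConv LinearMap.id)).symm
  rw [antipode_mul_id] at h
  simp only [LinearMap.comp_id] at h
  apply WithConv.ext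
  rw [h]
  ext
  simp

lemma convMul_algHom_comp_antipode {B : Type*} [Semiring B] [Algebra k B] (φ : H →ₐ[k] B) :
    toConv φ.toLinearMap * toConv (φ.toLinearMap ∘ₗ antipode k) = 1 := by
  have h := (algHom_comp_convMul_distrib φ (toConv LinearMap.id) (toConv (antipode k))).symm
  rw [id_mul_antipode] at h
  simp only [LinearMap.comp_id] at h
  apply WithConv.ext
  rw [h]
  ext
  simp

variable (k H) in
lemma includeLeft_convMul_includeRight :
    toConv (Algebra.TensorProduct.includeLeft (R := k) (S := k) (A := H) (B := H)).toLinearMap *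
      toConv (Algebra.TensorProduct.includeRight (R := k) (A := H) (B := H)).toLinearMap =
      toConv (comul (R := k) (A := H)) := by
  ext h
  simp [(ℛ k h).convMul_apply, ← (ℛ k h).eq]

lemma comul_comp_antipode_convMul_includeLeft :
    toConv (comul ∘ₗ antipode k (A := H)) *
      toConv (Algebra.TensorProduct.includeLeft (R := k) (S := k) (A := H) (B := H)).toLinearMap =
      toConv ((Algebra.TensorProduct.includeRight (R := k) (A := H) (B := H)).toLinearMap ∘ₗ
        antipode k) := by
  set iR := Algebra.TensorProduct.includeRight (R := k) (A := H) (B := H)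
  have hiL : toConv (Algebra.TensorProduct.includeLeft (R := k) (S := k)).toLinearMap =
      toConv comul * toConv (iR.toLinearMap ∘ₗ antipode k) := by
    rw [← includeLeft_convMul_includeRight, mul_assoc, convMul_algHom_comp_antipode, mul_one]
  let δ := Bialgebra.comulAlgHom k H
  calc _ = toConv (δ.toLinearMap ∘ₗ antipode k) * toConv δ.toLinearMap *
        toConv (iR.toLinearMap ∘ₗ antipode k) := by rw [hiL, mul_assoc]; rfl
    _ = _ := by rw [algHom_comp_antipode_convMul, one_mul]

lemma sum_comul_antipode_mul_tmul_one {h : H} {ι : Type*} (r : Coalgebra.Repr k h ι) :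
    ∑ i ∈ r.index, comul (antipode k (r.left i)) * (r.right i ⊗ₜ[k] (1 : H)) =
      1 ⊗ₜ antipode k h := by
  simpa [r.convMul_apply] using
    congr($(comul_comp_antipode_convMul_includeLeft (k := k) (H := H)).ofConv h)

end HopfAlgebra

section DualAction

variable {k H : Type*} [CommRing k] [Ring H] [HopfAlgebra k H]

lemma mul'_map_comp_mul_flip (g f : Dual k H) (a b : H) (u : H ⊗[k] H) :
    mul' k k (map (g ∘ₗ (mul k H).flip a) (f ∘ₗ (mul k H).flip b) u) =
      mul' k k (map g f (u * (a ⊗ₜ b))) := by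
  induction u using TensorProduct.induction_on with
  | zero => simp
  | tmul x y => simp
  | add u v hu hv => simp only [map_add, add_mul, hu, hv]

lemma conv_dualAct {h : H} {ι : Type*} (r : Coalgebra.Repr k h ι) (g f : Dual k H) :
    conv k H g (dualAct k H h f) =
      ∑ i ∈ r.index, dualAct k H (r.left i) (conv k H (g ∘ₗ (mul k H).flip (r.right i)) f) := by
  ext x
  have comp_mul_flip_one (φ : Dual k H) : φ ∘ₗ (mul k H).flip 1 = φ := by ext; simp
  calc conv k H g (dualAct k H h f) x
      = mul' k k (map g f (comul x * (1 ⊗ₜ antipode k h))) := by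
        rw [← mul'_map_comp_mul_flip, comp_mul_flip_one]; rfl
    _ = ∑ i ∈ r.index, mul' k k (map g f
          (comul (x * antipode k (r.left i)) * (r.right i ⊗ₜ[k] (1 : H)))) := by
        simp only [← sum_comul_antipode_mul_tmul_one r, Finset.mul_sum, map_sum,
          Bialgebra.comul_mul, mul_assoc]
    _ = _ := by
        simp only [← mul'_map_comp_mul_flip, LinearMap.sum_apply, comp_mul_flip_one]
        rfl

end DualAction

/-- `H*` is a right Hopf module over a finitely generated projective Hopf algebra `H`:
there is a comodule structure `ρ : H* → H* ⊗ H` (counital and coassociative) determined by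
`g·h = Σ h₍₀₎ g(h₍₁₎)` for `g, h ∈ H*` (convolution on the left), which is compatible in the
Hopf module sense with the right `H`-module structure `(f·h)(x) = f(x S(h))`. -/
theorem dual_is_right_hopf_module (k H : Type*) [CommRing k] [Ring H] [HopfAlgebra k H]
    [Module.Finite k H] [Module.Projective k H] :
    ∃ ρ : Module.Dual k H →ₗ[k] Module.Dual k H ⊗[k] H,
      (∀ f : Module.Dual k H,
        (TensorProduct.rid k (Module.Dual k H))
          ((LinearMap.lTensor (Module.Dual k H) (Coalgebra.counit (R := k))) (ρ f)) = f) ∧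
      (∀ f : Module.Dual k H,
        (TensorProduct.assoc k (Module.Dual k H) H H)
          ((LinearMap.rTensor H ρ) (ρ f)) =
        (LinearMap.lTensor (Module.Dual k H) (Coalgebra.comul (R := k))) (ρ f)) ∧
      (∀ g f : Module.Dual k H,
        (TensorProduct.rid k (Module.Dual k H))
          ((LinearMap.lTensor (Module.Dual k H) g) (ρ f)) = conv k H g f) ∧
      (∀ (f : Module.Dual k H) (h : H),
        ρ (dualAct k H h f) =
          (TensorProduct.homTensorHomMap (RingHom.id k) (Module.Dual k H) H (Module.Dual k H) H)
            ((TensorProduct.map (dualAct k H) (LinearMap.mul k H).flip)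
              (Coalgebra.comul (R := k) h)) (ρ f)) := by
  let ρ := (tensorEquivDualHom k (Dual k H) H).symm.toLinearMap ∘ₗ (convBilin k H).flip
  have hρ (g f : Dual k H) :
      TensorProduct.rid k (Dual k H) (lTensor _ g (ρ f)) = conv k H g f := by
    rw [← tensorEquivDualHom_apply]
    simp [ρ]
  refine ⟨ρ, fun f => (hρ _ f).trans (counit_conv f), fun f => ?_, hρ, fun f h => ?_⟩
  · rw [← LinearEquiv.eq_symm_apply]
    refine ext_of_rid_lTensor fun g => ext_of_rid_lTensor fun g' => ?_
    rw [rid_lTensor_assoc_symm_lTensor_comul, hρ, conv_assoc, ← hρ, ← hρ, LinearMap.rTensor,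
      rid_lTensor_map, LinearMap.comp_id]
  · refine ext_of_rid_lTensor fun g => ?_
    rw [hρ, conv_dualAct (ℛ k h), ← (ℛ k h).eq]
    simp only [map_sum, LinearMap.sum_apply, map_tmul, homTensorHomMap_apply, rid_lTensor_map, hρ]
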